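/- arXiv:1808.03446 — 2 statements merged into one kernel-verified Lean document; each statement's English description precedes it below -/
import Mathlib

section
/- (Putinar's Positivstellensatz) Let Ω = {x : g_j(x) ≥ 0, j=1,...,m} and suppose the quadratic module Q(g) is Archimedean. If a polynomial f is strictly positive on Ω, then f ∈ Q(g), i.e., f = σ₀ + Σⱼ σⱼ gⱼ with each σⱼ a sum of squares. -/
open MvPolynomial

/-- A polynomial is a sum of squares. -/
def IsSOS {n : ℕ} (p : MvPolynomial (Fin n) ℝ) : Prop :=
  ∃ (k : ℕ) (q : Fin k → MvPolynomial (Fin n) ℝ), p = ∑ i, q i ^ 2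

/-- Membership in the quadratic module Q(g₁,...,g_m). -/
def InQuadraticModule {n m : ℕ} (g : Fin m → MvPolynomial (Fin n) ℝ)
    (p : MvPolynomial (Fin n) ℝ) : Prop :=
  ∃ (σ₀ : MvPolynomial (Fin n) ℝ) (σ : Fin m → MvPolynomial (Fin n) ℝ),
    IsSOS σ₀ ∧ (∀ j, IsSOS (σ j)) ∧ p = σ₀ + ∑ j, σ j * g j

namespace Putinar

variable {n : ℕ}

/-- Abbreviation for the polynomial ring. -/
abbrev PolyR (n : ℕ) := MvPolynomial (Fin n) ℝ

lemma sos_zero : IsSOS (0 : PolyR n) := ⟨0, ![], by simp⟩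

lemma sos_sq (p : PolyR n) : IsSOS (p ^ 2) := ⟨1, ![p], by simp⟩

lemma sos_one : IsSOS (1 : PolyR n) := by simpa using sos_sq (1 : PolyR n)

lemma sos_add {p q : PolyR n} (hp : IsSOS p) (hq : IsSOS q) : IsSOS (p + q) := by
  obtain ⟨k, u, rfl⟩ := hp
  obtain ⟨l, v, rfl⟩ := hq
  refine ⟨k + l, Fin.append u v, ?_⟩
  rw [Fin.sum_univ_add]
  simp [Fin.append]

lemma sos_sq_mul {s : PolyR n} (p : PolyR n) (hs : IsSOS s) : IsSOS (p ^ 2 * s) := by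
  obtain ⟨k, u, rfl⟩ := hs
  exact ⟨k, fun i => p * u i, by rw [Finset.mul_sum]; simp [mul_pow]⟩

lemma sos_C {c : ℝ} (hc : 0 ≤ c) : IsSOS (C c : PolyR n) := by
  have : (C c : PolyR n) = (C (Real.sqrt c)) ^ 2 := by
    rw [← map_pow, Real.sq_sqrt hc]
  rw [this]; exact sos_sq _

lemma sos_C_mul {c : ℝ} {s : PolyR n} (hc : 0 ≤ c) (hs : IsSOS s) : IsSOS (C c * s) := by
  have : (C c : PolyR n) = (C (Real.sqrt c)) ^ 2 := by
    rw [← map_pow, Real.sq_sqrt hc]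
  rw [this]; exact sos_sq_mul _ hs

/-- A quadratic module: closed under addition, multiplication by squares, contains 1. -/
def IsQM (M : Set (PolyR n)) : Prop :=
  (∀ a ∈ M, ∀ b ∈ M, a + b ∈ M) ∧ (∀ p : PolyR n, ∀ a ∈ M, p ^ 2 * a ∈ M) ∧ (1 : PolyR n) ∈ M

namespace IsQM

variable {M : Set (PolyR n)} (hM : IsQM M)
include hM

lemma add {a b : PolyR n} (ha : a ∈ M) (hb : b ∈ M) : a + b ∈ M := hM.1 a ha b hb

lemma sq_mul (p : PolyR n) {a : PolyR n} (ha : a ∈ M) : p ^ 2 * a ∈ M := hM.2.1 p a ha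

lemma one : (1 : PolyR n) ∈ M := hM.2.2

lemma zero : (0 : PolyR n) ∈ M := by simpa using hM.sq_mul 0 hM.one

lemma sq (p : PolyR n) : p ^ 2 ∈ M := by simpa using hM.sq_mul p hM.one

lemma sum_mem {k : ℕ} {v : Fin k → PolyR n} (hv : ∀ i, v i ∈ M) : ∑ i, v i ∈ M := by
  induction k with
  | zero => simpa using hM.zero
  | succ k ih =>
    rw [Fin.sum_univ_castSucc]
    exact hM.add (ih fun i => hv _) (hv _)

lemma sos_mul {s a : PolyR n} (hs : IsSOS s) (ha : a ∈ M) : s * a ∈ M := by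
  obtain ⟨k, u, rfl⟩ := hs
  rw [Finset.sum_mul]
  exact hM.sum_mem fun i => hM.sq_mul _ ha

lemma sos_mem {s : PolyR n} (hs : IsSOS s) : s ∈ M := by simpa using hM.sos_mul hs hM.one

lemma C_mul {c : ℝ} {a : PolyR n} (hc : 0 ≤ c) (ha : a ∈ M) : C c * a ∈ M :=
  hM.sos_mul (sos_C hc) ha

lemma C_mem {c : ℝ} (hc : 0 ≤ c) : (C c : PolyR n) ∈ M := hM.sos_mem (sos_C hc)

lemma div_C {c : ℝ} (hc : 0 < c) {a : PolyR n} (h : C c * a ∈ M) : a ∈ M := by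
  have := hM.C_mul (c := c⁻¹) (by positivity) h
  rwa [← mul_assoc, ← map_mul, inv_mul_cancel₀ (ne_of_gt hc), map_one, one_mul] at this

/-- Key identity: if `d ± w ∈ M` with `d > 0` then `d² − w² ∈ M`. -/
lemma sq_diff {d : ℝ} {w : PolyR n} (hd : 0 < d) (h1 : C d - w ∈ M) (h2 : C d + w ∈ M) :
    C (d ^ 2) - w ^ 2 ∈ M := by
  have key : C (2 * d) * (C (d ^ 2) - w ^ 2)
      = (C d + w) ^ 2 * (C d - w) + (C d - w) ^ 2 * (C d + w) := by
    push_cast [map_mul, map_pow, map_ofNat]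
    ring
  have hmem : C (2 * d) * (C (d ^ 2) - w ^ 2) ∈ M := by
    rw [key]; exact hM.add (hM.sq_mul _ h1) (hM.sq_mul _ h2)
  have := hM.C_mul (c := (2 * d)⁻¹) (by positivity) hmem
  rwa [← mul_assoc, ← map_mul, inv_mul_cancel₀ (by positivity), map_one, one_mul] at this

end IsQM

lemma finset_sum_mem {M : Set (PolyR n)} (hM : IsQM M) {α : Type*} (s : Finset α)
    (v : α → PolyR n) (hv : ∀ i ∈ s, v i ∈ M) : ∑ i ∈ s, v i ∈ M :=
  Finset.sum_induction v (· ∈ M) (fun _ _ h1 h2 => hM.add h1 h2) hM.zero hv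

section Q0

variable {m : ℕ} (g : Fin m → PolyR n)

/-- The quadratic module generated by `g`. -/
def Q0 : Set (PolyR n) := {p | InQuadraticModule g p}

lemma qm_Q0 : IsQM (Q0 g) := by
  refine ⟨?_, ?_, ?_⟩
  · rintro a ⟨σ₀, σ, h0, h, rfl⟩ b ⟨τ₀, τ, k0, k, rfl⟩
    refine ⟨σ₀ + τ₀, fun j => σ j + τ j, sos_add h0 k0, fun j => sos_add (h j) (k j), ?_⟩
    simp only [add_mul, Finset.sum_add_distrib]
    ring
  · rintro p a ⟨σ₀, σ, h0, h, rfl⟩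
    refine ⟨p ^ 2 * σ₀, fun j => p ^ 2 * σ j, sos_sq_mul p h0, fun j => sos_sq_mul p (h j), ?_⟩
    rw [mul_add, Finset.mul_sum]
    congr 1
    apply Finset.sum_congr rfl
    intro j _
    ring
  · exact ⟨1, fun _ => 0, sos_one, fun _ => sos_zero, by simp⟩

lemma g_mem_Q0 (j : Fin m) : g j ∈ Q0 g := by
  refine ⟨0, fun j' => if j' = j then 1 else 0, sos_zero,
    fun j' => by by_cases h : j' = j <;> simp [h, sos_one, sos_zero], ?_⟩
  simp [ite_mul]

end Q0

section Bounded

variable {M : Set (PolyR n)} {M₀ : ℝ}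
variable (hM : IsQM M) (hA : C M₀ - ∑ i : Fin n, X i ^ 2 ∈ M) (hM₀ : 0 < M₀)

/-- `p` is bounded with respect to `M`. -/
def Bdd (M : Set (PolyR n)) (p : PolyR n) : Prop :=
  ∃ N : ℝ, 0 < N ∧ C N - p ∈ M ∧ C N + p ∈ M

include hM

lemma bdd_C (a : ℝ) : Bdd M (C a) := by
  refine ⟨|a| + 1, by positivity, ?_, ?_⟩
  · rw [← map_sub]
    exact hM.C_mem (by cases abs_cases a <;> linarith)
  · rw [← map_add]
    exact hM.C_mem (by cases abs_cases a <;> linarith)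

lemma bdd_neg {p : PolyR n} (h : Bdd M p) : Bdd M (-p) := by
  obtain ⟨N, hN, h1, h2⟩ := h
  exact ⟨N, hN, by rwa [sub_neg_eq_add], by rwa [← sub_eq_add_neg]⟩

lemma bdd_add {p q : PolyR n} (hp : Bdd M p) (hq : Bdd M q) : Bdd M (p + q) := by
  obtain ⟨N1, hN1, h1, h2⟩ := hp
  obtain ⟨N2, hN2, k1, k2⟩ := hq
  refine ⟨N1 + N2, by positivity, ?_, ?_⟩
  · have := hM.add h1 k1
    rw [map_add]
    convert this using 1
    ring
  · have := hM.add h2 k2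
    rw [map_add]
    convert this using 1
    ring

lemma bdd_sq_sub {p : PolyR n} (hp : Bdd M p) : ∃ N : ℝ, 0 < N ∧ C N - p ^ 2 ∈ M := by
  obtain ⟨N, hN, h1, h2⟩ := hp
  exact ⟨N ^ 2, by positivity, hM.sq_diff hN h1 h2⟩

lemma bdd_mul {p q : PolyR n} (hp : Bdd M p) (hq : Bdd M q) : Bdd M (p * q) := by
  obtain ⟨A, hA1, hA2⟩ := bdd_sq_sub hM (bdd_add hM hp hq)
  obtain ⟨B, hB1, hB2⟩ := bdd_sq_sub hM (bdd_add hM hp (bdd_neg hM hq))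
  have h1 : C A - 4 * (p * q) ∈ M := by
    have := hM.add hA2 (hM.sq (p - q))
    convert this using 1
    ring
  have h2 : C B + 4 * (p * q) ∈ M := by
    have := hM.add hB2 (hM.sq (p + q))
    convert this using 1
    ring
  refine ⟨(A + B) / 4, by positivity, ?_, ?_⟩
  · apply hM.div_C (c := 4) (by norm_num)
    rw [mul_sub, ← map_mul, show (4:ℝ) * ((A + B)/4) = A + B by ring]
    have := hM.add h1 (hM.C_mem (le_of_lt hB1))
    convert this using 1
    push_cast [map_add, map_ofNat]
    ring
  · apply hM.div_C (c := 4) (by norm_num)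
    rw [mul_add, ← map_mul, show (4:ℝ) * ((A + B)/4) = A + B by ring]
    have := hM.add h2 (hM.C_mem (le_of_lt hA1))
    convert this using 1
    push_cast [map_add, map_ofNat]
    ring

include hA hM₀

lemma bdd_X (i : Fin n) : Bdd M (X i) := by
  have hXi : C M₀ - X i ^ 2 ∈ M := by
    have := hM.add hA (finset_sum_mem hM (Finset.univ.erase i) (fun k => X k ^ 2)
      (fun k _ => hM.sq (X k)))
    convert this using 1
    rw [← Finset.add_sum_erase _ _ (Finset.mem_univ i)]
    ring
  refine ⟨(M₀ + 1) / 2, by positivity, ?_, ?_⟩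
  · apply hM.div_C (c := 2) (by norm_num)
    rw [mul_sub, ← map_mul, show (2:ℝ) * ((M₀ + 1)/2) = M₀ + 1 by ring]
    have := hM.add (hM.sq (X i - 1)) hXi
    convert this using 1
    push_cast [map_add, map_one, map_ofNat]
    ring
  · apply hM.div_C (c := 2) (by norm_num)
    rw [mul_add, ← map_mul, show (2:ℝ) * ((M₀ + 1)/2) = M₀ + 1 by ring]
    have := hM.add (hM.sq (X i + 1)) hXi
    convert this using 1
    push_cast [map_add, map_one, map_ofNat]
    ring

lemma bdd_all (p : PolyR n) : Bdd M p := by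
  induction p using MvPolynomial.induction_on with
  | C a => exact bdd_C hM a
  | add p q hp hq => exact bdd_add hM hp hq
  | mul_X p i hp => exact bdd_mul hM hp (bdd_X hM hA hM₀ i)

end Bounded

section DivisionLemma

variable {M : Set (PolyR n)} {M₀ : ℝ}
variable (hM : IsQM M) (hA : C M₀ - ∑ i : Fin n, X i ^ 2 ∈ M) (hM₀ : 0 < M₀)
include hM hA hM₀

/-- Putinar's key lemma: if `s*f = 1 + q` with `s` SOS and `q ∈ M`, then `f ∈ M`. -/
lemma division_lemma {s q f : PolyR n} (hs : IsSOS s) (hq : q ∈ M)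
    (hsf : s * f = 1 + q) : f ∈ M := by
  obtain ⟨Nf, hNf, hf1, hf2⟩ := bdd_all hM hA hM₀ f
  obtain ⟨Cs, hCs1, hCs2⟩ := bdd_sq_sub hM (bdd_all hM hA hM₀ s)
  set B : ℝ := 2 * Nf with hB
  have hBpos : 0 < B := by positivity
  set K : ℝ := B * Cs with hK
  have hKpos : 0 < K := by positivity
  set ε : ℝ := 1 / K with hε
  have hεpos : 0 < ε := by positivity
  have step : ∀ lam : ℝ, 0 < lam → lam ≤ Nf → f + C lam ∈ M → f + C (lam - 1/K) ∈ M := by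
    intro lam hlam1 hlam2 hmem
    have hE : (1 - C ε * s) ^ 2 * (f + C lam) ∈ M := hM.sq_mul _ hmem
    have m2 : (2 * C ε : PolyR n) * q ∈ M := by
      rw [show (2 * C ε : PolyR n) = C (2 * ε) by push_cast [map_mul, map_ofNat]; ring]
      exact hM.C_mul (by positivity) hq
    have m3 : (2 * C ε * C lam : PolyR n) * s ∈ M := by
      rw [show (2 * C ε * C lam : PolyR n) = C (2 * ε * lam) by
        push_cast [map_mul, map_ofNat]; ring]
      exact hM.C_mul (by positivity) (hM.sos_mem hs)
    have key : f + (C lam - 2 * C ε) + (C ε) ^ 2 * (s ^ 2 * (f + C lam))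
        = (1 - C ε * s) ^ 2 * (f + C lam) + 2 * C ε * q + 2 * C ε * C lam * s := by
      linear_combination (2 * C ε : PolyR n) * hsf
    have hdag : f + (C lam - 2 * C ε) + (C ε) ^ 2 * (s ^ 2 * (f + C lam)) ∈ M := by
      rw [key]; exact hM.add (hM.add hE m2) m3
    have hBf : C B - (f + C lam) ∈ M := by
      have := hM.add hf1 (hM.C_mem (c := Nf - lam) (by linarith))
      convert this using 1
      rw [hB]
      push_cast [map_sub, map_mul, map_ofNat]
      ring
    have t1 : s ^ 2 * (C B - (f + C lam)) ∈ M := hM.sq_mul _ hBf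
    have t2 : C B * (C Cs - s ^ 2) ∈ M := hM.C_mul (le_of_lt hBpos) hCs2
    have hT : C B * C Cs - s ^ 2 * (f + C lam) ∈ M := by
      have := hM.add t1 t2
      convert this using 1
      ring
    have hT2 : (C ε) ^ 2 * (C B * C Cs - s ^ 2 * (f + C lam)) ∈ M := hM.sq_mul _ hT
    have hfin : f + (C lam - 2 * C ε) + (C ε) ^ 2 * (C B * C Cs) ∈ M := by
      have := hM.add hdag hT2
      convert this using 1
      ring
    have hconst : (C (lam - 1/K) : PolyR n) = C lam - 2 * C ε + (C ε) ^ 2 * (C B * C Cs) := by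
      rw [show lam - 1/K = lam - 2 * ε + ε ^ 2 * (B * Cs) by
        rw [hε, hK]; field_simp; ring]
      push_cast [map_sub, map_add, map_mul, map_pow, map_ofNat]
      ring
    rw [hconst]
    convert hfin using 1
    ring
  have main : ∀ k : ℕ, f ∈ M ∨ (0 < Nf - k * (1/K) ∧ f + C (Nf - k * (1/K)) ∈ M) := by
    intro k
    induction k with
    | zero =>
      right
      refine ⟨by simpa using hNf, ?_⟩
      simpa [add_comm] using hf2
    | succ k ih =>
      rcases ih with h | ⟨hpos, h⟩
      · exact Or.inl h
      · have hle : Nf - k * (1/K) ≤ Nf := by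
          have : 0 ≤ (k : ℝ) * (1/K) := by positivity
          linarith
        have h' := step _ hpos hle h
        have heq : Nf - (k + 1 : ℕ) * (1/K) = Nf - k * (1/K) - 1/K := by
          push_cast; ring
        by_cases hpos' : 0 < Nf - (k + 1 : ℕ) * (1/K)
        · right
          refine ⟨hpos', ?_⟩
          rw [heq]
          exact h'
        · left
          have : f = (f + C (Nf - k * (1/K) - 1/K)) + C (-(Nf - k * (1/K) - 1/K)) := by
            rw [map_neg]; ring
          rw [this]
          refine hM.add h' (hM.C_mem ?_)
          rw [heq] at hpos'
          linarith [not_lt.mp hpos']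
  obtain ⟨k, hk⟩ : ∃ k : ℕ, Nf * K ≤ k := ⟨⌈Nf * K⌉₊, Nat.le_ceil _⟩
  rcases main k with h | ⟨hpos, _⟩
  · exact h
  · exfalso
    have hdiv : Nf ≤ (k : ℝ) / K := (le_div_iff₀ hKpos).mpr hk
    have heq : (k : ℝ) / K = k * (1/K) := by ring
    linarith

end DivisionLemma

section Maximal

variable {M : Set (PolyR n)}

lemma IsQM.supp_mul (hM : IsQM M) {t : PolyR n} (h1 : t ∈ M) (h2 : -t ∈ M)
    (p : PolyR n) : p * t ∈ M := by
  apply hM.div_C (c := 4) (by norm_num)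
  have h4 : (C 4 : PolyR n) * (p * t) = (p + 1) ^ 2 * t + (p - 1) ^ 2 * (-t) := by
    push_cast [map_ofNat]
    ring
  rw [h4]
  exact hM.add (hM.sq_mul _ h1) (hM.sq_mul _ h2)

lemma IsQM.C_nonneg (hM : IsQM M) (hproper : (-1 : PolyR n) ∉ M) {t : ℝ}
    (ht : (C t : PolyR n) ∈ M) : 0 ≤ t := by
  by_contra h
  push_neg at h
  have hinv : (0:ℝ) ≤ -t⁻¹ := by
    have : t⁻¹ < 0 := inv_neg''.mpr h
    linarith
  have hmem := hM.C_mul (c := -t⁻¹) hinv ht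
  rw [← map_mul] at hmem
  have : -t⁻¹ * t = -1 := by rw [neg_mul, inv_mul_cancel₀ (ne_of_lt h)]
  rw [this, map_neg, map_one] at hmem
  exact hproper hmem

/-- Adjoining an element to a quadratic module. -/
def adjoin (M : Set (PolyR n)) (a : PolyR n) : Set (PolyR n) :=
  {z | ∃ q ∈ M, ∃ s, IsSOS s ∧ z = q + s * a}

lemma adjoin_qm (hM : IsQM M) (a : PolyR n) : IsQM (adjoin M a) := by
  refine ⟨?_, ?_, ?_⟩
  · rintro _ ⟨q, hq, s, hs, rfl⟩ _ ⟨q', hq', s', hs', rfl⟩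
    exact ⟨q + q', hM.add hq hq', s + s', sos_add hs hs', by ring⟩
  · rintro p _ ⟨q, hq, s, hs, rfl⟩
    exact ⟨p ^ 2 * q, hM.sq_mul _ hq, p ^ 2 * s, sos_sq_mul _ hs, by ring⟩
  · exact ⟨1, hM.one, 0, sos_zero, by ring⟩

lemma subset_adjoin (a : PolyR n) : M ⊆ adjoin M a :=
  fun q hq => ⟨q, hq, 0, sos_zero, by ring⟩

lemma mem_adjoin (hM : IsQM M) (a : PolyR n) : a ∈ adjoin M a :=
  ⟨0, hM.zero, 1, sos_one, by ring⟩

end Maximal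

lemma exists_maximal_total {M₁ : Set (PolyR n)} (h1 : IsQM M₁)
    (hproper : (-1 : PolyR n) ∉ M₁) :
    ∃ M' : Set (PolyR n), IsQM M' ∧ M₁ ⊆ M' ∧ (-1 : PolyR n) ∉ M' ∧
      ∀ a : PolyR n, a ∈ M' ∨ -a ∈ M' := by
  set S : Set (Set (PolyR n)) := {N | IsQM N ∧ M₁ ⊆ N ∧ (-1 : PolyR n) ∉ N} with hS
  have Hchain : ∀ c ⊆ S, IsChain (· ⊆ ·) c → c.Nonempty →
      ∃ ub ∈ S, ∀ s ∈ c, s ⊆ ub := by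
    intro c hcS hchain ⟨N₀, hN₀⟩
    refine ⟨⋃₀ c, ⟨⟨?_, ?_, ?_⟩, ?_, ?_⟩, fun s hs => Set.subset_sUnion_of_mem hs⟩
    · rintro x ⟨A, hA, hxA⟩ y ⟨B, hB, hyB⟩
      rcases hchain.total hA hB with h | h
      · exact ⟨B, hB, (hcS hB).1.add (h hxA) hyB⟩
      · exact ⟨A, hA, (hcS hA).1.add hxA (h hyB)⟩
    · rintro p x ⟨A, hA, hxA⟩
      exact ⟨A, hA, (hcS hA).1.sq_mul p hxA⟩
    · exact ⟨N₀, hN₀, (hcS hN₀).1.one⟩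
    · exact fun x hx => ⟨N₀, hN₀, (hcS hN₀).2.1 hx⟩
    · rintro ⟨A, hA, hmA⟩
      exact (hcS hA).2.2 hmA
  obtain ⟨M', hM'sub, hmax⟩ := zorn_subset_nonempty S Hchain M₁ ⟨h1, subset_rfl, hproper⟩
  obtain ⟨hQM, hsub, hprop⟩ := hmax.1
  refine ⟨M', hQM, hsub, hprop, ?_⟩
  intro a
  by_contra hcon
  push_neg at hcon
  obtain ⟨ha, hna⟩ := hcon
  have key : ∀ b, b ∉ M' → (-1 : PolyR n) ∈ adjoin M' b := by
    intro b hb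
    by_contra hb2
    have hmem : adjoin M' b ∈ S := ⟨adjoin_qm hQM b, hsub.trans (subset_adjoin b), hb2⟩
    have := hmax.2 hmem (subset_adjoin b)
    exact hb (this (mem_adjoin hQM b))
  obtain ⟨q₁, hq₁, s₁, hs₁, e₁⟩ := key a ha
  obtain ⟨q₂, hq₂, s₂, hs₂, e₂⟩ := key (-a) hna
  have hzero : -s₁ = s₂ + (s₂ * q₁ + s₁ * q₂) := by
    linear_combination s₂ * e₁ + s₁ * e₂
  have hns₁ : -s₁ ∈ M' := by
    rw [hzero]
    exact hQM.add (hQM.sos_mem hs₂) (hQM.add (hQM.sos_mul hs₂ hq₁) (hQM.sos_mul hs₁ hq₂))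
  have hprod : a * s₁ ∈ M' := hQM.supp_mul (hQM.sos_mem hs₁) hns₁ a
  have : (-1 : PolyR n) ∈ M' := by
    rw [e₁]
    exact hQM.add hq₁ (by rwa [mul_comm] at hprod)
  exact hprop this

section Character

variable {M : Set (PolyR n)} {M₀ : ℝ}

/-- The state associated to a quadratic module. -/
noncomputable def phi (M : Set (PolyR n)) (p : PolyR n) : ℝ :=
  sInf {r : ℝ | C r - p ∈ M}

variable (hM : IsQM M) (hA : C M₀ - ∑ i : Fin n, X i ^ 2 ∈ M) (hM₀ : 0 < M₀)
  (hprop : (-1 : PolyR n) ∉ M) (htot : ∀ a : PolyR n, a ∈ M ∨ -a ∈ M)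

include hM hA hM₀

lemma phi_set_nonempty (p : PolyR n) : {r : ℝ | C r - p ∈ M}.Nonempty := by
  obtain ⟨N, _, h1, _⟩ := bdd_all hM hA hM₀ p
  exact ⟨N, h1⟩

include hprop

lemma phi_set_bddBelow (p : PolyR n) : BddBelow {r : ℝ | C r - p ∈ M} := by
  obtain ⟨N, _, _, h2⟩ := bdd_all hM hA hM₀ p
  refine ⟨-N, fun r hr => ?_⟩
  have hmem : (C (r + N) : PolyR n) ∈ M := by
    have := hM.add hr h2
    convert this using 1
    rw [map_add]
    ring
  have := hM.C_nonneg hprop hmem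
  linarith

lemma phi_le {p : PolyR n} {r : ℝ} (h : C r - p ∈ M) : phi M p ≤ r :=
  csInf_le (phi_set_bddBelow hM hA hM₀ hprop p) h

lemma mem_of_phi_lt {p : PolyR n} {r : ℝ} (h : phi M p < r) : C r - p ∈ M := by
  obtain ⟨r', hr', hlt⟩ := exists_lt_of_csInf_lt (phi_set_nonempty hM hA hM₀ p) h
  have : (C r - p : PolyR n) = C (r - r') + (C r' - p) := by
    rw [map_sub]; ring
  rw [this]
  exact hM.add (hM.C_mem (by linarith)) hr'

lemma phi_zero : phi M (0 : PolyR n) = 0 := by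
  refine le_antisymm (phi_le hM hA hM₀ hprop (by simpa using hM.zero)) ?_
  refine le_csInf (phi_set_nonempty hM hA hM₀ 0) fun r hr => ?_
  have : (C r : PolyR n) ∈ M := by simpa using hr
  exact hM.C_nonneg hprop this

lemma phi_add_le (p q : PolyR n) : phi M (p + q) ≤ phi M p + phi M q := by
  refine le_of_forall_pos_le_add fun ε hε => ?_
  have h1 := mem_of_phi_lt hM hA hM₀ hprop (p := p) (r := phi M p + ε/2) (by linarith)
  have h2 := mem_of_phi_lt hM hA hM₀ hprop (p := q) (r := phi M q + ε/2) (by linarith)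
  refine phi_le hM hA hM₀ hprop ?_
  have := hM.add h1 h2
  convert this using 1
  rw [show phi M p + phi M q + ε = (phi M p + ε/2) + (phi M q + ε/2) by ring, map_add]
  ring

lemma phi_C (c : ℝ) : phi M (C c : PolyR n) = c := by
  refine le_antisymm (phi_le hM hA hM₀ hprop (by simpa using hM.zero)) ?_
  refine le_csInf (phi_set_nonempty hM hA hM₀ _) fun r hr => ?_
  have : (C (r - c) : PolyR n) ∈ M := by rwa [map_sub]
  have := hM.C_nonneg hprop this
  linarith

include htot

lemma phi_neg (p : PolyR n) : phi M (-p) = - phi M p := by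
  have hge : 0 ≤ phi M p + phi M (-p) := by
    have h0 := phi_add_le hM hA hM₀ hprop p (-p)
    rw [show p + -p = (0 : PolyR n) by ring, phi_zero hM hA hM₀ hprop] at h0
    linarith
  have hle : phi M p + phi M (-p) ≤ 0 := by
    refine le_of_forall_pos_le_add fun δ hδ => ?_
    have hnot : (C (phi M p - δ) : PolyR n) - p ∉ M := by
      intro hmem
      have := phi_le hM hA hM₀ hprop hmem
      linarith
    have hmem : -(C (phi M p - δ) - p) ∈ M := by
      rcases htot (C (phi M p - δ) - p) with h | h
      · exact absurd h hnot
      · exact h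
    have heq : -(C (phi M p - δ) - p : PolyR n) = C (-(phi M p - δ)) - (-p) := by
      rw [map_neg]; ring
    rw [heq] at hmem
    have := phi_le hM hA hM₀ hprop hmem
    linarith
  linarith

lemma phi_add (p q : PolyR n) : phi M (p + q) = phi M p + phi M q := by
  refine le_antisymm (phi_add_le hM hA hM₀ hprop p q) ?_
  have h1 : phi M p ≤ phi M (p + q) + phi M (-q) := by
    have := phi_add_le hM hA hM₀ hprop (p + q) (-q)
    rw [show p + q + -q = p by ring] at this
    exact this
  rw [phi_neg hM hA hM₀ hprop htot] at h1
  linarith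

omit htot

lemma phi_C_mul_le {a : ℝ} (ha : 0 < a) (p : PolyR n) :
    phi M (C a * p) ≤ a * phi M p := by
  refine le_of_forall_pos_le_add fun ε hε => ?_
  have h1 := mem_of_phi_lt hM hA hM₀ hprop (p := p) (r := phi M p + ε/a)
    (by have hh := div_pos hε ha; linarith)
  have h2 : (C (a * (phi M p + ε/a)) : PolyR n) - C a * p ∈ M := by
    have := hM.C_mul (le_of_lt ha) h1
    convert this using 1
    rw [map_mul, mul_sub]
  have := phi_le hM hA hM₀ hprop h2
  have hcan : a * (ε / a) = ε := by field_simp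
  calc phi M (C a * p) ≤ a * (phi M p + ε/a) := this
    _ = a * phi M p + ε := by rw [mul_add, hcan]

lemma phi_C_mul_pos {a : ℝ} (ha : 0 < a) (p : PolyR n) :
    phi M (C a * p) = a * phi M p := by
  refine le_antisymm (phi_C_mul_le hM hA hM₀ hprop ha p) ?_
  have h := phi_C_mul_le hM hA hM₀ hprop (a := a⁻¹) (by positivity) (C a * p)
  rw [← mul_assoc, ← map_mul, inv_mul_cancel₀ (ne_of_gt ha), map_one, one_mul] at h
  have := mul_le_mul_of_nonneg_left h (le_of_lt ha)
  rw [← mul_assoc, mul_inv_cancel₀ (ne_of_gt ha), one_mul] at this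
  exact this

include htot

lemma phi_C_mul (a : ℝ) (p : PolyR n) : phi M (C a * p) = a * phi M p := by
  rcases lt_trichotomy a 0 with h | h | h
  · have heq : (C a * p : PolyR n) = -(C (-a) * (p)) := by
      rw [map_neg]; ring
    rw [heq, phi_neg hM hA hM₀ hprop htot,
      phi_C_mul_pos hM hA hM₀ hprop (by linarith)]
    ring
  · subst h
    simp [phi_zero hM hA hM₀ hprop]
  · exact phi_C_mul_pos hM hA hM₀ hprop h p

lemma phi_mem_nonneg {p : PolyR n} (h : p ∈ M) : 0 ≤ phi M p := by
  have h1 : phi M (-p) ≤ 0 := by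
    refine phi_le hM hA hM₀ hprop ?_
    have : (C (0:ℝ) : PolyR n) - -p = p := by simp
    rwa [this]
  rw [phi_neg hM hA hM₀ hprop htot] at h1
  linarith

lemma phi_sq (p : PolyR n) : phi M (p ^ 2) = (phi M p) ^ 2 := by
  set c := phi M p with hc
  set w := p - C c with hw
  have hwsq : phi M (w ^ 2) = 0 := by
    refine le_antisymm ?_ (phi_mem_nonneg hM hA hM₀ hprop htot (hM.sq w))
    have key : ∀ ε : ℝ, 0 < ε → phi M (w ^ 2) ≤ ε := by
      intro ε hε
      set δ := Real.sqrt ε with hδ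
      have hδpos : 0 < δ := Real.sqrt_pos.mpr hε
      have h1 : (C δ : PolyR n) - w ∈ M := by
        have := mem_of_phi_lt hM hA hM₀ hprop (p := p) (r := c + δ) (by linarith)
        convert this using 1
        rw [hw, map_add]
        ring
      have h2 : (C δ : PolyR n) + w ∈ M := by
        have hphin : phi M (-p) = -c := by rw [phi_neg hM hA hM₀ hprop htot]
        have := mem_of_phi_lt hM hA hM₀ hprop (p := -p) (r := -c + δ) (by rw [hphin]; linarith)
        convert this using 1
        rw [hw, map_add, map_neg]
        ring
      have := hM.sq_diff hδpos h1 h2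
      have hle := phi_le hM hA hM₀ hprop this
      rwa [hδ, Real.sq_sqrt (le_of_lt hε)] at hle
    by_contra hcon
    push_neg at hcon
    have := key (phi M (w ^ 2) / 2) (by linarith)
    linarith
  have hexp : w ^ 2 = p ^ 2 + (C (-(2*c)) * p + C (c ^ 2)) := by
    rw [hw]
    push_cast [map_neg, map_mul, map_pow, map_ofNat]
    ring
  rw [hexp, phi_add hM hA hM₀ hprop htot, phi_add hM hA hM₀ hprop htot,
    phi_C_mul hM hA hM₀ hprop htot, phi_C hM hA hM₀ hprop] at hwsq
  nlinarith [hwsq]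

lemma phi_mul (p q : PolyR n) : phi M (p * q) = phi M p * phi M q := by
  have hexp : (p + q) ^ 2 = p ^ 2 + (q ^ 2 + C (2:ℝ) * (p * q)) := by
    push_cast [map_ofNat]
    ring
  have h := phi_sq hM hA hM₀ hprop htot (p + q)
  rw [hexp, phi_add hM hA hM₀ hprop htot, phi_add hM hA hM₀ hprop htot,
    phi_C_mul hM hA hM₀ hprop htot, phi_add hM hA hM₀ hprop htot,
    phi_sq hM hA hM₀ hprop htot p, phi_sq hM hA hM₀ hprop htot q] at h
  nlinarith [h]

lemma phi_eval (p : PolyR n) :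
    phi M p = eval (fun i => phi M (X i)) p := by
  induction p using MvPolynomial.induction_on with
  | C a => simp [phi_C hM hA hM₀ hprop]
  | add p q hp hq => rw [phi_add hM hA hM₀ hprop htot, map_add, hp, hq]
  | mul_X p i hp => rw [phi_mul hM hA hM₀ hprop htot, map_mul, hp, eval_X]

end Character


end Putinar

/-- Putinar's Positivstellensatz. -/
theorem putinar_positivstellensatz {n m : ℕ}
    (g : Fin m → MvPolynomial (Fin n) ℝ)
    (hArch : ∃ M : ℝ, 0 < M ∧
      InQuadraticModule g (MvPolynomial.C M - ∑ i : Fin n, MvPolynomial.X i ^ 2))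
    (f : MvPolynomial (Fin n) ℝ)
    (hf : ∀ x ∈ {x : Fin n → ℝ | ∀ j, 0 ≤ MvPolynomial.eval x (g j)},
      0 < MvPolynomial.eval x f) :
    InQuadraticModule g f := by
  classical
  by_contra hfQ
  obtain ⟨M₀, hM₀, hArchMem⟩ := hArch
  have hQ0 : Putinar.IsQM (Putinar.Q0 g) := Putinar.qm_Q0 g
  have hArchQ0 : MvPolynomial.C M₀ - ∑ i : Fin n, MvPolynomial.X i ^ 2 ∈ Putinar.Q0 g :=
    hArchMem
  -- The quadratic module generated by Q0 and -f is proper.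
  have hproper : (-1 : Putinar.PolyR n) ∉ Putinar.adjoin (Putinar.Q0 g) (-f) := by
    rintro ⟨q, hq, s, hs, e⟩
    have hsf : s * f = 1 + q := by linear_combination e
    exact hfQ (Putinar.division_lemma hQ0 hArchQ0 hM₀ hs hq hsf)
  obtain ⟨M', hQM', hsub, hprop', htot⟩ :=
    Putinar.exists_maximal_total (Putinar.adjoin_qm hQ0 (-f)) hproper
  have hA' : MvPolynomial.C M₀ - ∑ i : Fin n, MvPolynomial.X i ^ 2 ∈ M' :=
    hsub (Putinar.subset_adjoin _ hArchQ0)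
  set x : Fin n → ℝ := fun i => Putinar.phi M' (MvPolynomial.X i) with hx
  have hxK : x ∈ {x : Fin n → ℝ | ∀ j, 0 ≤ MvPolynomial.eval x (g j)} := by
    intro j
    have hmem : g j ∈ M' := hsub (Putinar.subset_adjoin _ (Putinar.g_mem_Q0 g j))
    have h0 := Putinar.phi_mem_nonneg hQM' hA' hM₀ hprop' htot hmem
    rwa [Putinar.phi_eval hQM' hA' hM₀ hprop' htot] at h0
  have hneg : -f ∈ M' := hsub (Putinar.mem_adjoin hQ0 (-f))
  have h0 := Putinar.phi_mem_nonneg hQM' hA' hM₀ hprop' htot hneg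
  rw [Putinar.phi_neg hQM' hA' hM₀ hprop' htot,
    Putinar.phi_eval hQM' hA' hM₀ hprop' htot] at h0
  have := hf x hxK
  rw [← hx] at h0
  linarith
end

section
/- (Krivine–Vasilescu Positivstellensatz) Let Ω = {x : gⱼ(x) ≥ 0, j=1,...,m} be compact with 0 ≤ gⱼ ≤ 1 on Ω for all j, and suppose {1, g₁,...,g_m} generates the ℝ-algebra ℝ[x]. If f is strictly positive on Ω, then f = Σ_{α,β} c_{α,β} Πⱼ gⱼ^{αⱼ} (1−gⱼ)^{βⱼ} for finitely many nonnegative coefficients c_{α,β}. -/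
/-!
Since `g` generates `ℝ[x]`, there are polynomials `Pᵢ` in `m` variables with `Pᵢ(g) = xᵢ`. Put
`F₀ = f(P)` and `q = ∑ⱼ (yⱼ - gⱼ(P))²`, so that `F₀(g) = f` and `q(g) = 0`. If `y` lies in the
cube `[0,1]ᵐ` and `q(y) = 0`, then `x = P(y)` satisfies `g(x) = y`, hence `x ∈ Ω` and
`F₀(y) = f(x) > 0`; by compactness `F = F₀ + c q` is positive on the whole cube for some `c`, and
still `F(g) = f`.

A polynomial `F` positive on the cube has positive coefficients in the Bernstein basis
`∏ⱼ yⱼ^kⱼ (1 - yⱼ)^(N - kⱼ)` for `N` large: up to binomial factors these coefficients are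
`∑ₐ Fₐ ∏ⱼ C(kⱼ, aⱼ) / C(N, aⱼ)`, which differ from `F(k / N)` by `O(1 / N)`. Substituting `y = g`
gives the representation.
-/

open MvPolynomial Finset Filter Topology

theorem Finset.norm_prod_sub_prod_le {ι R : Type*} [NormedCommRing R] [NormOneClass R]
    (s : Finset ι) {u v : ι → R} (hu : ∀ i ∈ s, ‖u i‖ ≤ 1) (hv : ∀ i ∈ s, ‖v i‖ ≤ 1) :
    ‖∏ i ∈ s, u i - ∏ i ∈ s, v i‖ ≤ ∑ i ∈ s, ‖u i - v i‖ := by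
  induction s using Finset.cons_induction with
  | empty => simp
  | cons a s ha ih =>
    rw [prod_cons, prod_cons, sum_cons]
    have ih := ih (fun i hi => hu i (mem_cons_of_mem hi)) (fun i hi => hv i (mem_cons_of_mem hi))
    have hua := hu a (mem_cons_self a s)
    have hQ : ‖∏ i ∈ s, v i‖ ≤ 1 := (norm_prod_le s v).trans
      (prod_le_one (fun _ _ => norm_nonneg _) fun i hi => hv i (mem_cons_of_mem hi))
    calc ‖u a * ∏ i ∈ s, u i - v a * ∏ i ∈ s, v i‖
        = ‖u a * (∏ i ∈ s, u i - ∏ i ∈ s, v i) + (u a - v a) * ∏ i ∈ s, v i‖ := by ring_nf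
      _ ≤ ‖u a‖ * ‖∏ i ∈ s, u i - ∏ i ∈ s, v i‖ + ‖u a - v a‖ * ‖∏ i ∈ s, v i‖ :=
        (norm_add_le _ _).trans (add_le_add (norm_mul_le _ _) (norm_mul_le _ _))
      _ ≤ 1 * ∑ i ∈ s, ‖u i - v i‖ + ‖u a - v a‖ * 1 := by gcongr
      _ = ‖u a - v a‖ + ∑ i ∈ s, ‖u i - v i‖ := by ring

theorem IsCompact.exists_forall_pos_add_mul {X : Type*} [TopologicalSpace X] {K : Set X}
    (hK : IsCompact K) {F q : X → ℝ} (hF : Continuous F) (hq : Continuous q)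
    (hq0 : ∀ x ∈ K, 0 ≤ q x) (hFq : ∀ x ∈ K, q x = 0 → 0 < F x) :
    ∃ c : ℝ, ∀ x ∈ K, 0 < F x + c * q x := by
  let U : ℕ → Set X := fun n => {x | 0 < F x + n * max (q x) 0}
  have hcover : K ⊆ ⋃ n, U n := by
    intro x hx
    rcases (hq0 x hx).eq_or_lt with h | h
    · exact Set.mem_iUnion.2 ⟨0, by simpa [U] using hFq x hx h.symm⟩
    · obtain ⟨n, hn⟩ := exists_nat_gt (-F x / q x)
      refine Set.mem_iUnion.2 ⟨n, ?_⟩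
      have : -F x < n * q x := by rwa [div_lt_iff₀ h] at hn
      simp only [U, Set.mem_ofPred_eq, max_eq_left h.le]
      linarith
  have hmono : Monotone U := fun a b hab x hx => by
    simp only [U, Set.mem_ofPred_eq] at hx ⊢
    have : (a : ℝ) * max (q x) 0 ≤ b * max (q x) 0 := by gcongr
    linarith
  obtain ⟨n, hn⟩ := hK.elim_directed_cover U (fun n => isOpen_lt continuous_const (by fun_prop))
    hcover hmono.directed_le
  exact ⟨n, fun x hx => by simpa [U, max_eq_left (hq0 x hx)] using hn hx⟩

theorem choose_nsmul_pow_eq_sum {A : Type*} [CommRing A] (y : A) {N r : ℕ} (hr : r ≤ N) :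
    N.choose r • y ^ r =
      ∑ k ∈ range (N + 1), (k.choose r * N.choose k) • (y ^ k * (1 - y) ^ (N - k)) := by
  have hsplit : N + 1 = r + (N - r + 1) := by omega
  rw [hsplit, sum_range_add, sum_eq_zero fun k hk => by
    rw [Nat.choose_eq_zero_of_lt (mem_range.1 hk), zero_mul, zero_smul], zero_add]
  have hbinom := add_pow y (1 - y) (N - r)
  rw [add_sub_cancel, one_pow] at hbinom
  calc N.choose r • y ^ r = N.choose r • (y ^ r * (y + (1 - y)) ^ (N - r)) := by simp
    _ = _ := by
      rw [add_pow, mul_sum, smul_sum]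
      refine sum_congr rfl fun j hj => ?_
      have hj : j ≤ N - r := Nat.lt_succ_iff.1 (mem_range.1 hj)
      have hchoose : (r + j).choose r * N.choose (r + j) = N.choose r * (N - r).choose j := by
        rw [mul_comm, Nat.choose_mul (Nat.le_add_right r j), Nat.add_sub_cancel_left]
      rw [hchoose, show N - (r + j) = N - r - j by omega, pow_add]
      simp only [nsmul_eq_mul]
      push_cast
      ring

noncomputable def bernsteinWeight (N r k : ℕ) : ℝ := (k.choose r : ℝ) / N.choose r

theorem bernsteinWeight_eq_prod (N r k : ℕ) :
    bernsteinWeight N r k = ∏ i ∈ range r, ((k : ℝ) - i) / (N - i) := by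
  rw [bernsteinWeight, Nat.cast_choose_eq_descPochhammer_div, Nat.cast_choose_eq_descPochhammer_div,
    descPochhammer_eval_eq_prod_range, descPochhammer_eval_eq_prod_range,
    div_div_div_cancel_right₀ (by positivity), prod_div_distrib]

theorem bernsteinWeight_nonneg (N r k : ℕ) : 0 ≤ bernsteinWeight N r k := by
  unfold bernsteinWeight; positivity

theorem bernsteinWeight_le_one {N k : ℕ} (r : ℕ) (hk : k ≤ N) : bernsteinWeight N r k ≤ 1 :=
  div_le_one_of_le₀ (by exact_mod_cast Nat.choose_le_choose r hk) (Nat.cast_nonneg _)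

theorem pow_eq_sum_bernsteinWeight_smul {A : Type*} [CommRing A] [Algebra ℝ A] (y : A) {N r : ℕ}
    (hr : r ≤ N) :
    y ^ r = ∑ k ∈ range (N + 1),
      (bernsteinWeight N r k * N.choose k) • (y ^ k * (1 - y) ^ (N - k)) := by
  have hc : (N.choose r : ℝ) ≠ 0 := by exact_mod_cast (Nat.choose_pos hr).ne'
  rw [← inv_smul_smul₀ hc (y ^ r), Nat.cast_smul_eq_nsmul, choose_nsmul_pow_eq_sum y hr, smul_sum]
  refine sum_congr rfl fun k _ => ?_
  rw [← Nat.cast_smul_eq_nsmul ℝ, smul_smul, bernsteinWeight]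
  congr 1
  push_cast
  field_simp

theorem abs_sub_div_sub_sub_div_le {N d i k : ℕ} (hi : i ≤ d) (hd : d < N) (hk : k ≤ N) :
    |((k : ℝ) - i) / (N - i) - k / N| ≤ d / (N - d) := by
  have hid : (i : ℝ) ≤ d := by exact_mod_cast hi
  have hdN : (d : ℝ) < N := by exact_mod_cast hd
  have hN : (0 : ℝ) < N := (Nat.cast_nonneg d).trans_lt hdN
  have hkN : (k : ℝ) ≤ N := by exact_mod_cast hk
  have hNi : (0 : ℝ) < N - i := by linarith
  rw [show ((k : ℝ) - i) / (N - i) - k / N = -(i * (N - k) / (N * (N - i))) by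
    field_simp; ring, abs_neg, abs_of_nonneg (by positivity),
    div_le_div_iff₀ (by positivity) (by linarith)]
  calc (i : ℝ) * (N - k) * (N - d) ≤ d * N * (N - i) := by gcongr; linarith
    _ = d * (N * (N - i)) := by ring

theorem abs_bernsteinWeight_sub_pow_le {N d r k : ℕ} (hr : r ≤ d) (hd : d < N) (hk : k ≤ N) :
    |bernsteinWeight N r k - ((k : ℝ) / N) ^ r| ≤ d ^ 2 / (N - d) := by
  have hdN : (d : ℝ) < N := by exact_mod_cast hd
  have hN : (0 : ℝ) < N := (Nat.cast_nonneg d).trans_lt hdN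
  have hkN : (k : ℝ) / N ≤ 1 := div_le_one_of_le₀ (by exact_mod_cast hk) hN.le
  rcases lt_or_ge k r with hkr | hrk
  · have hd1 : (1 : ℝ) ≤ d := by exact_mod_cast (Nat.zero_lt_of_lt hkr).trans_le hr
    rw [bernsteinWeight, Nat.choose_eq_zero_of_lt hkr, Nat.cast_zero, zero_div, zero_sub, abs_neg,
      abs_of_nonneg (by positivity)]
    calc ((k : ℝ) / N) ^ r ≤ k / N := pow_le_of_le_one (by positivity) hkN (by omega)
      _ ≤ d / N := by gcongr; exact_mod_cast (hkr.trans_le hr).le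
      _ ≤ d ^ 2 / (N - d) := by
        gcongr ?_ / ?_ <;> nlinarith
  · have hfactor_le_one : ∀ i ∈ range r, ‖((k : ℝ) - i) / (N - i)‖ ≤ 1 := by
      intro i hi
      have hik : (i : ℝ) ≤ k := by exact_mod_cast ((mem_range.1 hi).trans_le hrk).le
      have hiN : (i : ℝ) < N := by exact_mod_cast (mem_range.1 hi).trans_le (hrk.trans hk)
      have hk' : (k : ℝ) ≤ N := by exact_mod_cast hk
      rw [Real.norm_eq_abs, abs_of_nonneg (div_nonneg (by linarith) (by linarith)),
        div_le_one (by linarith)]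
      linarith
    calc |bernsteinWeight N r k - ((k : ℝ) / N) ^ r|
        = ‖∏ i ∈ range r, ((k : ℝ) - i) / (N - i) - ∏ _i ∈ range r, (k : ℝ) / N‖ := by
          rw [bernsteinWeight_eq_prod, prod_const, card_range, Real.norm_eq_abs]
      _ ≤ ∑ i ∈ range r, ‖((k : ℝ) - i) / (N - i) - k / N‖ :=
          norm_prod_sub_prod_le _ hfactor_le_one fun _ _ => by
            rwa [Real.norm_eq_abs, abs_of_nonneg (by positivity)]
      _ ≤ ∑ _i ∈ range r, (d : ℝ) / (N - d) := sum_le_sum fun i hi =>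
          abs_sub_div_sub_sub_div_le ((mem_range.1 hi).trans_le hr).le hd hk
      _ = r * d / (N - d) := by rw [sum_const, card_range, nsmul_eq_mul, mul_div_assoc]
      _ ≤ d ^ 2 / (N - d) := by
          rw [sq]
          gcongr

section Bernstein

variable {σ : Type*} [Fintype σ]

noncomputable def bernsteinCoeff (F : MvPolynomial σ ℝ) (N : ℕ) (k : σ → ℕ) : ℝ :=
  ∑ a ∈ F.support, F.coeff a * ∏ j, bernsteinWeight N (a j) (k j)

theorem aeval_eq_sum_bernsteinCoeff_smul {A : Type*} [DecidableEq σ] [CommRing A] [Algebra ℝ A]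
    (y : σ → A) {F : MvPolynomial σ ℝ} {N : ℕ} (hN : ∀ j, F.degreeOf j ≤ N) :
    aeval y F = ∑ k ∈ Fintype.piFinset fun _ => range (N + 1),
      (bernsteinCoeff F N k * ∏ j, (N.choose (k j) : ℝ)) •
        ∏ j, (y j ^ k j * (1 - y j) ^ (N - k j)) := by
  have hmonomial : ∀ a ∈ F.support, ∏ j, y j ^ a j = ∑ k ∈ Fintype.piFinset fun _ => range (N + 1),
      (∏ j, bernsteinWeight N (a j) (k j) * N.choose (k j)) •
        ∏ j, (y j ^ k j * (1 - y j) ^ (N - k j)) := fun a ha => by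
    calc ∏ j, y j ^ a j = ∏ j, ∑ k ∈ range (N + 1),
          (bernsteinWeight N (a j) k * N.choose k) • (y j ^ k * (1 - y j) ^ (N - k)) :=
        prod_congr rfl fun j _ =>
          pow_eq_sum_bernsteinWeight_smul (y j) ((monomial_le_degreeOf j ha).trans (hN j))
      _ = _ := by simp_rw [prod_univ_sum, prod_smul]
  rw [aeval_def, eval₂_eq', sum_congr rfl fun a ha => by
    rw [← Algebra.smul_def, hmonomial a ha, smul_sum], sum_comm]
  refine sum_congr rfl fun k _ => ?_
  rw [bernsteinCoeff, sum_mul, sum_smul]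
  simp_rw [smul_smul, prod_mul_distrib, mul_assoc]

theorem abs_bernsteinCoeff_sub_eval_le (F : MvPolynomial σ ℝ) {N d : ℕ}
    (hF : ∀ j, F.degreeOf j ≤ d) (hd : d < N) {k : σ → ℕ} (hk : ∀ j, k j ≤ N) :
    |bernsteinCoeff F N k - eval (fun j => (k j : ℝ) / N) F| ≤
      (∑ a ∈ F.support, |F.coeff a|) * Fintype.card σ * d ^ 2 / (N - d) := by
  have hN : (0 : ℝ) < N := by exact_mod_cast (Nat.zero_le d).trans_lt hd
  have hkN : ∀ j, (k j : ℝ) / N ≤ 1 := fun j => div_le_one_of_le₀ (by exact_mod_cast hk j) hN.le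
  rw [bernsteinCoeff, eval_eq', ← sum_sub_distrib]
  calc _ ≤ ∑ a ∈ F.support, |F.coeff a * ∏ j, bernsteinWeight N (a j) (k j) -
        F.coeff a * ∏ j, ((k j : ℝ) / N) ^ a j| := abs_sum_le_sum_abs _ _
    _ ≤ ∑ a ∈ F.support, |F.coeff a| * (Fintype.card σ * (d ^ 2 / (N - d))) := by
      refine sum_le_sum fun a ha => ?_
      rw [← mul_sub, abs_mul]
      gcongr
      have hweight : ∀ j ∈ univ, ‖bernsteinWeight N (a j) (k j)‖ ≤ 1 := fun j _ => by
        rw [Real.norm_eq_abs, abs_of_nonneg (bernsteinWeight_nonneg ..)]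
        exact bernsteinWeight_le_one _ (hk j)
      have hpow : ∀ j ∈ univ, ‖((k j : ℝ) / N) ^ a j‖ ≤ 1 := fun j _ => by
        rw [Real.norm_eq_abs, abs_of_nonneg (by positivity)]
        exact pow_le_one₀ (by positivity) (hkN j)
      calc |∏ j, bernsteinWeight N (a j) (k j) - ∏ j, ((k j : ℝ) / N) ^ a j|
          ≤ ∑ j, |bernsteinWeight N (a j) (k j) - ((k j : ℝ) / N) ^ a j| := by
            simpa only [Real.norm_eq_abs] using norm_prod_sub_prod_le univ hweight hpow
        _ ≤ ∑ _j : σ, (d : ℝ) ^ 2 / (N - d) := sum_le_sum fun j _ =>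
            abs_bernsteinWeight_sub_pow_le ((monomial_le_degreeOf j ha).trans (hF j)) hd (hk j)
        _ = Fintype.card σ * (d ^ 2 / (N - d)) := by
            rw [sum_const, card_univ, nsmul_eq_mul]
    _ = _ := by rw [← sum_mul]; ring

theorem exists_forall_bernsteinCoeff_pos {F : MvPolynomial σ ℝ}
    (hF : ∀ y ∈ Set.Icc (0 : σ → ℝ) 1, 0 < eval y F) :
    ∃ N, (∀ j, F.degreeOf j ≤ N) ∧ ∀ k : σ → ℕ, (∀ j, k j ≤ N) → 0 < bernsteinCoeff F N k := by
  obtain ⟨y₀, hy₀, hmin⟩ := isCompact_Icc.exists_isMinOn (Set.nonempty_Icc.2 zero_le_one)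
    (continuous_eval F).continuousOn
  set d := F.totalDegree
  set L := (∑ a ∈ F.support, |F.coeff a|) * Fintype.card σ * d ^ 2
  have herror : Tendsto (fun N : ℕ => L / ((N : ℝ) - d)) atTop (𝓝 0) :=
    tendsto_const_nhds.div_atTop (tendsto_atTop_add_const_right _ _ tendsto_natCast_atTop_atTop)
  obtain ⟨N, hdN, hLN⟩ := ((eventually_gt_atTop d).and
    (herror.eventually (gt_mem_nhds (hF y₀ hy₀)))).exists
  have hdeg : ∀ j, F.degreeOf j ≤ d := degreeOf_le_totalDegree F
  refine ⟨N, fun j => (hdeg j).trans hdN.le, fun k hk => ?_⟩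
  have hN : (0 : ℝ) < N := by exact_mod_cast (Nat.zero_le d).trans_lt hdN
  have hgrid : (fun j => (k j : ℝ) / N) ∈ Set.Icc (0 : σ → ℝ) 1 :=
    ⟨fun j => by positivity, fun j => div_le_one_of_le₀ (Nat.cast_le.2 (hk j)) hN.le⟩
  have happrox := (abs_le.1 (abs_bernsteinCoeff_sub_eval_le F hdeg hdN hk)).1
  have hmin_le : eval y₀ F ≤ eval (fun j => (k j : ℝ) / N) F := hmin hgrid
  linarith

theorem exists_pos_bernstein_expansion {A : Type*} [DecidableEq σ] [CommRing A] [Algebra ℝ A]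
    (y : σ → A) {F : MvPolynomial σ ℝ}
    (hF : ∀ x ∈ Set.Icc (0 : σ → ℝ) 1, 0 < eval x F) :
    ∃ (N : ℕ) (c : (σ → ℕ) → ℝ), (∀ k ∈ Fintype.piFinset fun _ => range (N + 1), 0 < c k) ∧
      aeval y F = ∑ k ∈ Fintype.piFinset fun _ => range (N + 1),
        c k • ∏ j, (y j ^ k j * (1 - y j) ^ (N - k j)) := by
  obtain ⟨N, hdeg, hpos⟩ := exists_forall_bernsteinCoeff_pos hF
  refine ⟨N, fun k => bernsteinCoeff F N k * ∏ j, (N.choose (k j) : ℝ), fun k hk => ?_,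
    aeval_eq_sum_bernsteinCoeff_smul y hdeg⟩
  have hkN : ∀ j, k j ≤ N := fun j => Nat.lt_succ_iff.1 (mem_range.1 (Fintype.mem_piFinset.1 hk j))
  exact mul_pos (hpos k hkN) (prod_pos fun j _ => by exact_mod_cast Nat.choose_pos (hkN j))

end Bernstein

theorem exists_bind₁_eq_of_forall_pos {σ τ : Type*} [Fintype τ] (g : τ → MvPolynomial σ ℝ)
    (hgen : Algebra.adjoin ℝ (Set.range g) = ⊤) (f : MvPolynomial σ ℝ)
    (hf : ∀ x, (∀ j, 0 ≤ eval x (g j)) → 0 < eval x f) :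
    ∃ F : MvPolynomial τ ℝ, bind₁ g F = f ∧ ∀ y ∈ Set.Icc (0 : τ → ℝ) 1, 0 < eval y F := by
  have hsurj : ∀ p, ∃ P : MvPolynomial τ ℝ, bind₁ g P = p := fun p => by
    rw [bind₁, ← AlgHom.mem_range, ← Algebra.adjoin_range_eq_range_aeval, hgen]
    exact Algebra.mem_top
  choose P hP using fun i => hsurj (X i)
  have hsection : ∀ p, bind₁ g (bind₁ P p) = p := fun p => by
    rw [bind₁_bind₁]
    simp [hP]
  have heval : ∀ y p, eval y (bind₁ P p) = eval (fun i => eval y (P i)) p := fun y p =>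
    eval₂Hom_bind₁ _ _ _ _
  set q : MvPolynomial τ ℝ := ∑ j, (X j - bind₁ P (g j)) ^ 2
  have hq : bind₁ g q = 0 := by simp [q, hsection]
  have hq0 : ∀ y, 0 ≤ eval y q := fun y => by simp only [q, map_sum, map_pow]; positivity
  have hpos : ∀ y ∈ Set.Icc (0 : τ → ℝ) 1, eval y q = 0 → 0 < eval y (bind₁ P f) := by
    intro y hy hyq
    have hsq : ∑ j, (y j - eval y (bind₁ P (g j))) ^ 2 = 0 := by simpa [q] using hyq
    have hgy : ∀ j, eval (fun i => eval y (P i)) (g j) = y j := fun j => by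
      have := (sum_eq_zero_iff_of_nonneg fun j _ => sq_nonneg _).1 hsq j (mem_univ j)
      rw [← heval]
      linarith [pow_eq_zero_iff two_ne_zero |>.1 this]
    rw [heval]
    exact hf _ fun j => (hgy j).symm ▸ hy.1 j
  obtain ⟨c, hc⟩ := isCompact_Icc.exists_forall_pos_add_mul (continuous_eval _) (continuous_eval q)
    (fun y _ => hq0 y) hpos
  exact ⟨bind₁ P f + C c * q, by simp [hsection, hq], fun y hy => by simpa using hc y hy⟩

theorem krivine_vasilescu_general {n m : ℕ}
    (g : Fin m → MvPolynomial (Fin n) ℝ)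
    (Ω : Set (Fin n → ℝ))
    (hΩ : Ω = {x : Fin n → ℝ | ∀ j, 0 ≤ MvPolynomial.eval x (g j)})
    (hgen : Algebra.adjoin ℝ (Set.range g) = (⊤ : Subalgebra ℝ (MvPolynomial (Fin n) ℝ)))
    (f : MvPolynomial (Fin n) ℝ)
    (hf : ∀ x ∈ Ω, 0 < MvPolynomial.eval x f) :
    ∃ (S : Finset ((Fin m → ℕ) × (Fin m → ℕ))) (c : (Fin m → ℕ) × (Fin m → ℕ) → ℝ),
      (∀ ab ∈ S, 0 < c ab) ∧
      f = ∑ ab ∈ S, MvPolynomial.C (c ab) *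
            ∏ j, g j ^ (ab.1 j) * (1 - g j) ^ (ab.2 j) := by
  subst hΩ
  obtain ⟨F, rfl, hF⟩ := exists_bind₁_eq_of_forall_pos g hgen f hf
  obtain ⟨N, c, hc, hexp⟩ := exists_pos_bernstein_expansion g hF
  refine ⟨(Fintype.piFinset fun _ => range (N + 1)).image fun k => (k, fun j => N - k j),
    fun ab => c ab.1, by simpa using hc, ?_⟩
  rw [sum_image fun _ _ _ _ h => congrArg Prod.fst h]
  exact hexp.trans (sum_congr rfl fun k _ => smul_eq_C_mul _ _)

/-- Krivine–Vasilescu Positivstellensatz. -/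
theorem krivine_vasilescu {n m : ℕ}
    (g : Fin m → MvPolynomial (Fin n) ℝ)
    (Ω : Set (Fin n → ℝ))
    (hΩ : Ω = {x : Fin n → ℝ | ∀ j, 0 ≤ MvPolynomial.eval x (g j)})
    (hcompact : IsCompact Ω)
    (hnorm : ∀ x ∈ Ω, ∀ j, 0 ≤ MvPolynomial.eval x (g j) ∧ MvPolynomial.eval x (g j) ≤ 1)
    (hgen : Algebra.adjoin ℝ (Set.range g) = (⊤ : Subalgebra ℝ (MvPolynomial (Fin n) ℝ)))
    (f : MvPolynomial (Fin n) ℝ)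
    (hf : ∀ x ∈ Ω, 0 < MvPolynomial.eval x f) :
    ∃ (S : Finset ((Fin m → ℕ) × (Fin m → ℕ))) (c : (Fin m → ℕ) × (Fin m → ℕ) → ℝ),
      (∀ ab ∈ S, 0 < c ab) ∧
      f = ∑ ab ∈ S, MvPolynomial.C (c ab) *
            ∏ j, g j ^ (ab.1 j) * (1 - g j) ^ (ab.2 j) :=
  krivine_vasilescu_general g Ω hΩ hgen f hf
end
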